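/- Consider the cascade ξ̇ = -k·ξ (with k > 0) and η̇ = f₀(η) + g₀(η)ξ, where f₀ is globally exponentially stable (there is a C¹ function W₀ with c₁‖η‖² ≤ W₀(η) ≤ c₂‖η‖², ∇W₀(η)·f₀(η) ≤ -c₃‖η‖², ‖∇W₀(η)‖ ≤ c₄‖η‖) and ‖g₀(η)‖ ≤ C. Then the origin of the cascade is globally exponentially stable, and there exist constants K₁, K₂ such that ∫₀^∞ ‖ξ(t)‖² dt ≤ K₁‖ξ(0)‖²/k and ∫₀^∞ ‖η(t)‖² dt ≤ K₂(‖η(0)‖² + ‖ξ(0)‖²/k) for all k ≥ 1. -/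

import Mathlib

/-!
With `b = c₄²C²/(2c₃)`, the Lyapunov function `V = W₀(η) + (b/k)‖ξ‖²` decays at a rate
`α = min (c₃/(2c₂)) 1` that does not depend on `k ≥ 1`: along `ξ̇ = -kξ` the `ξ`-term contributes
the dissipation `-2b‖ξ‖²`, which by Young's inequality absorbs the cross term
`∇W₀(η)·g₀(η)ξ ≤ c₄C‖η‖‖ξ‖`, so `V̇ ≤ -(c₃/2)‖η‖² - b‖ξ‖² ≤ -αV`. Grönwall then gives
`c₁‖η(t)‖² ≤ e^{-αt}(c₂‖η(0)‖² + b‖ξ(0)‖²/k)`, and integrating this bound and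
`‖ξ(t)‖² ≤ e^{-2kt}‖ξ(0)‖²` over `(0, ∞)` gives the energy estimates.
-/

open MeasureTheory Set Real

theorem le_exp_neg_mul_mul_of_hasDerivAt_le {V V' : ℝ → ℝ} {α t : ℝ}
    (hV : ∀ s, 0 ≤ s → HasDerivAt V (V' s) s) (hV' : ∀ s, 0 ≤ s → V' s ≤ -α * V s)
    (ht : 0 ≤ t) : V t ≤ exp (-α * t) * V 0 := by
  have h := le_gronwallBound_of_liminf_deriv_right_le (δ := V 0) (K := -α) (ε := 0) (b := t)
    (fun s hs => (hV s hs.1).continuousAt.continuousWithinAt)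
    (fun s hs _ hr => (hV s hs.1).hasDerivWithinAt.liminf_right_slope_le hr)
    le_rfl (fun s hs => by simpa using hV' s hs.1) t ⟨ht, le_rfl⟩
  simpa [gronwallBound_ε0, mul_comm] using h

theorem setIntegral_Ioi_le_div_of_le_exp {f : ℝ → ℝ} {A β : ℝ} (hβ : 0 < β)
    (hf₀ : ∀ t, 0 < t → 0 ≤ f t) (hf : ∀ t, 0 < t → f t ≤ A * exp (-β * t)) :
    ∫ t in Ioi 0, f t ≤ A / β := by
  calc ∫ t in Ioi 0, f t ≤ ∫ t in Ioi 0, A * exp (-β * t) :=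
        integral_mono_of_nonneg ((ae_restrict_iff' measurableSet_Ioi).2 (.of_forall hf₀))
          ((exp_neg_integrableOn_Ioi 0 hβ).const_mul A)
          ((ae_restrict_iff' measurableSet_Ioi).2 (.of_forall hf))
    _ = A / β := by
        rw [integral_const_mul, integral_exp_mul_Ioi (neg_lt_zero.2 hβ), mul_zero, exp_zero]
        ring

section

variable {E F : Type*} [NormedAddCommGroup E] [InnerProductSpace ℝ E]
  [NormedAddCommGroup F] [InnerProductSpace ℝ F]

theorem norm_sq_le_of_hasDerivAt_neg_smul {ξ : ℝ → F} {k t : ℝ}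
    (hξ : ∀ s, 0 ≤ s → HasDerivAt ξ (-(k • ξ s)) s) (ht : 0 ≤ t) :
    ‖ξ t‖ ^ 2 ≤ exp (-(2 * k) * t) * ‖ξ 0‖ ^ 2 :=
  le_exp_neg_mul_mul_of_hasDerivAt_le (fun s hs => (hξ s hs).norm_sq)
    (fun s _ => by
      rw [inner_neg_right, real_inner_smul_right, real_inner_self_eq_norm_sq]
      linarith) ht

theorem norm_le_of_hasDerivAt_neg_smul {ξ : ℝ → F} {k t : ℝ}
    (hξ : ∀ s, 0 ≤ s → HasDerivAt ξ (-(k • ξ s)) s) (ht : 0 ≤ t) :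
    ‖ξ t‖ ≤ exp (-k * t) * ‖ξ 0‖ := by
  refine (pow_le_pow_iff_left₀ (norm_nonneg _) (by positivity) two_ne_zero).1 ?_
  calc ‖ξ t‖ ^ 2 ≤ exp (-(2 * k) * t) * ‖ξ 0‖ ^ 2 := norm_sq_le_of_hasDerivAt_neg_smul hξ ht
    _ = (exp (-k * t) * ‖ξ 0‖) ^ 2 := by rw [mul_pow, ← exp_nat_mul]; ring_nf

theorem integral_norm_sq_le_of_hasDerivAt_neg_smul {ξ : ℝ → F} {k : ℝ} (hk : 0 < k)
    (hξ : ∀ s, 0 ≤ s → HasDerivAt ξ (-(k • ξ s)) s) :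
    ∫ t in Ioi 0, ‖ξ t‖ ^ 2 ≤ 1 / 2 * ‖ξ 0‖ ^ 2 / k := by
  calc ∫ t in Ioi 0, ‖ξ t‖ ^ 2 ≤ ‖ξ 0‖ ^ 2 / (2 * k) :=
        setIntegral_Ioi_le_div_of_le_exp (by positivity) (fun t _ => by positivity)
          fun t ht => by rw [mul_comm]; exact norm_sq_le_of_hasDerivAt_neg_smul hξ ht.le
    _ = 1 / 2 * ‖ξ 0‖ ^ 2 / k := by ring

structure IsExpLyapunov (f₀ : E → E) (W₀ : E → ℝ) (c₁ c₂ c₃ c₄ : ℝ) : Prop where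
  differentiable : Differentiable ℝ W₀
  le_apply : ∀ x, c₁ * ‖x‖ ^ 2 ≤ W₀ x
  apply_le : ∀ x, W₀ x ≤ c₂ * ‖x‖ ^ 2
  fderiv_apply_le : ∀ x, fderiv ℝ W₀ x (f₀ x) ≤ -(c₃ * ‖x‖ ^ 2)
  norm_fderiv_le : ∀ x, ‖fderiv ℝ W₀ x‖ ≤ c₄ * ‖x‖

namespace IsExpLyapunov

variable {f₀ : E → E} {g₀ : E → F →L[ℝ] E} {W₀ : E → ℝ} {c₁ c₂ c₃ c₄ C : ℝ}

theorem fderiv_apply_add_le (hW : IsExpLyapunov f₀ W₀ c₁ c₂ c₃ c₄) (hc₃ : 0 < c₃)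
    (hg₀ : ∀ x, ‖g₀ x‖ ≤ C) (x : E) (y : F) :
    fderiv ℝ W₀ x (f₀ x + g₀ x y) ≤
      -(c₃ / 2 * ‖x‖ ^ 2) + c₄ ^ 2 * C ^ 2 / (2 * c₃) * ‖y‖ ^ 2 := by
  have hcross : fderiv ℝ W₀ x (g₀ x y) ≤ c₄ * ‖x‖ * (C * ‖y‖) :=
    calc fderiv ℝ W₀ x (g₀ x y) ≤ ‖fderiv ℝ W₀ x‖ * ‖g₀ x y‖ :=
          (Real.le_norm_self _).trans ((fderiv ℝ W₀ x).le_opNorm _)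
      _ ≤ c₄ * ‖x‖ * (C * ‖y‖) :=
          mul_le_mul (hW.norm_fderiv_le x) ((g₀ x).le_of_opNorm_le (hg₀ x) y) (norm_nonneg _)
            ((norm_nonneg _).trans (hW.norm_fderiv_le x))
  have hyoung : c₄ * ‖x‖ * (C * ‖y‖) ≤ c₃ / 2 * ‖x‖ ^ 2 + c₄ ^ 2 * C ^ 2 / (2 * c₃) * ‖y‖ ^ 2 := by
    have hsq : c₃ / 2 * ‖x‖ ^ 2 + c₄ ^ 2 * C ^ 2 / (2 * c₃) * ‖y‖ ^ 2 - c₄ * ‖x‖ * (C * ‖y‖)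
        = (c₃ * ‖x‖ - c₄ * C * ‖y‖) ^ 2 / (2 * c₃) := by
      field_simp
      ring
    have : 0 ≤ (c₃ * ‖x‖ - c₄ * C * ‖y‖) ^ 2 / (2 * c₃) := by positivity
    linarith
  rw [map_add]
  linarith [hW.fderiv_apply_le x]

theorem cascade_decay (hW : IsExpLyapunov f₀ W₀ c₁ c₂ c₃ c₄) (hc₂ : 0 < c₂) (hc₃ : 0 < c₃)
    (hg₀ : ∀ x, ‖g₀ x‖ ≤ C) {k : ℝ} (hk : 1 ≤ k) {ξ : ℝ → F} {η : ℝ → E}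
    (hξ : ∀ t, 0 ≤ t → HasDerivAt ξ (-(k • ξ t)) t)
    (hη : ∀ t, 0 ≤ t → HasDerivAt η (f₀ (η t) + g₀ (η t) (ξ t)) t) {t : ℝ} (ht : 0 ≤ t) :
    W₀ (η t) + c₄ ^ 2 * C ^ 2 / (2 * c₃) / k * ‖ξ t‖ ^ 2 ≤
      exp (-min (c₃ / (2 * c₂)) 1 * t) *
        (W₀ (η 0) + c₄ ^ 2 * C ^ 2 / (2 * c₃) / k * ‖ξ 0‖ ^ 2) := by
  set b := c₄ ^ 2 * C ^ 2 / (2 * c₃)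
  set α := min (c₃ / (2 * c₂)) 1
  have hb : 0 ≤ b := by positivity
  have hα : 0 ≤ α := le_min (by positivity) zero_le_one
  have hαc₂ : α * c₂ ≤ c₃ / 2 := by
    have := min_le_left (c₃ / (2 * c₂)) 1
    rw [le_div_iff₀ (by positivity)] at this
    linarith
  have hαb : α * (b / k) ≤ b := by
    rw [mul_div_assoc', div_le_iff₀ (by linarith)]
    nlinarith [min_le_right (c₃ / (2 * c₂)) 1]
  refine le_exp_neg_mul_mul_of_hasDerivAt_le (fun s hs =>
    ((hW.differentiable (η s)).hasFDerivAt.comp_hasDerivAt s (hη s hs)).add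
      ((hξ s hs).norm_sq.const_mul (b / k))) (fun s _ => ?_) ht
  have hinner : b / k * (2 * inner ℝ (ξ s) (-(k • ξ s))) = -(2 * b * ‖ξ s‖ ^ 2) := by
    rw [inner_neg_right, real_inner_smul_right, real_inner_self_eq_norm_sq]
    field_simp
  have hW₀ : α * W₀ (η s) ≤ c₃ / 2 * ‖η s‖ ^ 2 := by
    nlinarith [mul_le_mul_of_nonneg_left (hW.apply_le (η s)) hα, sq_nonneg ‖η s‖]
  have hξs : α * (b / k * ‖ξ s‖ ^ 2) ≤ b * ‖ξ s‖ ^ 2 := by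
    rw [← mul_assoc]; exact mul_le_mul_of_nonneg_right hαb (sq_nonneg _)
  dsimp only [Pi.add_apply, Function.comp_apply]
  linarith [hW.fderiv_apply_add_le hc₃ hg₀ (η s) (ξ s)]

theorem cascade_norm_sq_le (hW : IsExpLyapunov f₀ W₀ c₁ c₂ c₃ c₄) (hc₁ : 0 < c₁) (hc₂ : 0 < c₂)
    (hc₃ : 0 < c₃) (hg₀ : ∀ x, ‖g₀ x‖ ≤ C) {k : ℝ} (hk : 1 ≤ k) {ξ : ℝ → F} {η : ℝ → E}
    (hξ : ∀ t, 0 ≤ t → HasDerivAt ξ (-(k • ξ t)) t)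
    (hη : ∀ t, 0 ≤ t → HasDerivAt η (f₀ (η t) + g₀ (η t) (ξ t)) t) {t : ℝ} (ht : 0 ≤ t) :
    ‖η t‖ ^ 2 ≤ (c₂ * ‖η 0‖ ^ 2 + c₄ ^ 2 * C ^ 2 / (2 * c₃) / k * ‖ξ 0‖ ^ 2) / c₁ *
      exp (-min (c₃ / (2 * c₂)) 1 * t) := by
  have hξt : 0 ≤ c₄ ^ 2 * C ^ 2 / (2 * c₃) / k * ‖ξ t‖ ^ 2 := by
    have : 0 < k := by linarith
    positivity
  rw [div_mul_eq_mul_div, le_div_iff₀ hc₁, mul_comm _ (exp _)]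
  calc ‖η t‖ ^ 2 * c₁ ≤ W₀ (η t) + c₄ ^ 2 * C ^ 2 / (2 * c₃) / k * ‖ξ t‖ ^ 2 := by
        linarith [hW.le_apply (η t)]
    _ ≤ _ := hW.cascade_decay hc₂ hc₃ hg₀ hk hξ hη ht
    _ ≤ _ := by gcongr; exact hW.apply_le (η 0)

theorem cascade_norm_add_norm_le (hW : IsExpLyapunov f₀ W₀ c₁ c₂ c₃ c₄) (hc₁ : 0 < c₁)
    (hc₂ : 0 < c₂) (hc₃ : 0 < c₃) (hg₀ : ∀ x, ‖g₀ x‖ ≤ C) {k : ℝ} (hk : 1 ≤ k)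
    {ξ : ℝ → F} {η : ℝ → E} (hξ : ∀ t, 0 ≤ t → HasDerivAt ξ (-(k • ξ t)) t)
    (hη : ∀ t, 0 ≤ t → HasDerivAt η (f₀ (η t) + g₀ (η t) (ξ t)) t) {t : ℝ} (ht : 0 ≤ t) :
    ‖ξ t‖ + ‖η t‖ ≤ (1 + √((c₂ + c₄ ^ 2 * C ^ 2 / (2 * c₃)) / c₁)) *
      exp (-(min (c₃ / (2 * c₂)) 1 / 2) * t) * (‖ξ 0‖ + ‖η 0‖) := by
  set b := c₄ ^ 2 * C ^ 2 / (2 * c₃)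
  set α := min (c₃ / (2 * c₂)) 1
  set r := ‖ξ 0‖ + ‖η 0‖
  have hb : 0 ≤ b := by positivity
  have hα : α ≤ 1 := min_le_right _ _
  have hξ₀ : ‖ξ 0‖ ≤ r := le_add_of_nonneg_right (norm_nonneg _)
  have hη₀ : ‖η 0‖ ≤ r := le_add_of_nonneg_left (norm_nonneg _)
  have hξt : ‖ξ t‖ ≤ exp (-(α / 2) * t) * r :=
    (norm_le_of_hasDerivAt_neg_smul hξ ht).trans
      (mul_le_mul (exp_le_exp.2 (by nlinarith)) hξ₀ (norm_nonneg _) (exp_pos _).le)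
  have hηt : ‖η t‖ ≤ √((c₂ + b) / c₁) * exp (-(α / 2) * t) * r := by
    refine (pow_le_pow_iff_left₀ (norm_nonneg _) (by positivity) two_ne_zero).1 ?_
    have hbk : b / k ≤ b := div_le_self hb hk
    calc ‖η t‖ ^ 2 ≤ (c₂ * ‖η 0‖ ^ 2 + b / k * ‖ξ 0‖ ^ 2) / c₁ * exp (-α * t) :=
          hW.cascade_norm_sq_le hc₁ hc₂ hc₃ hg₀ hk hξ hη ht
      _ ≤ (c₂ + b) * r ^ 2 / c₁ * exp (-α * t) := by
          gcongr
          nlinarith [pow_le_pow_left₀ (norm_nonneg _) hη₀ 2, pow_le_pow_left₀ (norm_nonneg _) hξ₀ 2,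
            mul_le_mul_of_nonneg_right hbk (sq_nonneg ‖ξ 0‖)]
      _ = (√((c₂ + b) / c₁) * exp (-(α / 2) * t) * r) ^ 2 := by
          rw [mul_pow, mul_pow, sq_sqrt (by positivity), ← exp_nat_mul]
          ring_nf
  calc ‖ξ t‖ + ‖η t‖ ≤ exp (-(α / 2) * t) * r + √((c₂ + b) / c₁) * exp (-(α / 2) * t) * r :=
        add_le_add hξt hηt
    _ = (1 + √((c₂ + b) / c₁)) * exp (-(α / 2) * t) * r := by ring

theorem cascade_integral_norm_sq_le (hW : IsExpLyapunov f₀ W₀ c₁ c₂ c₃ c₄) (hc₁ : 0 < c₁)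
    (hc₂ : 0 < c₂) (hc₃ : 0 < c₃) (hg₀ : ∀ x, ‖g₀ x‖ ≤ C) {k : ℝ} (hk : 1 ≤ k)
    {ξ : ℝ → F} {η : ℝ → E} (hξ : ∀ t, 0 ≤ t → HasDerivAt ξ (-(k • ξ t)) t)
    (hη : ∀ t, 0 ≤ t → HasDerivAt η (f₀ (η t) + g₀ (η t) (ξ t)) t) :
    ∫ t in Ioi 0, ‖η t‖ ^ 2 ≤ (c₂ + c₄ ^ 2 * C ^ 2 / (2 * c₃)) / (c₁ * min (c₃ / (2 * c₂)) 1) *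
      (‖η 0‖ ^ 2 + ‖ξ 0‖ ^ 2 / k) := by
  set b := c₄ ^ 2 * C ^ 2 / (2 * c₃)
  set α := min (c₃ / (2 * c₂)) 1
  have hb : 0 ≤ b := by positivity
  have hα : 0 < α := lt_min (by positivity) one_pos
  calc ∫ t in Ioi 0, ‖η t‖ ^ 2 ≤ (c₂ * ‖η 0‖ ^ 2 + b / k * ‖ξ 0‖ ^ 2) / c₁ / α :=
        setIntegral_Ioi_le_div_of_le_exp hα (fun t _ => by positivity)
          fun t ht => hW.cascade_norm_sq_le hc₁ hc₂ hc₃ hg₀ hk hξ hη ht.le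
    _ ≤ (c₂ + b) * (‖η 0‖ ^ 2 + ‖ξ 0‖ ^ 2 / k) / c₁ / α := by
        have hξ₀ : 0 ≤ ‖ξ 0‖ ^ 2 / k := by positivity
        have hsplit : b / k * ‖ξ 0‖ ^ 2 = b * (‖ξ 0‖ ^ 2 / k) := by ring
        gcongr
        nlinarith [mul_nonneg hb (sq_nonneg ‖η 0‖), mul_nonneg hc₂.le hξ₀]
    _ = (c₂ + b) / (c₁ * α) * (‖η 0‖ ^ 2 + ‖ξ 0‖ ^ 2 / k) := by ring

end IsExpLyapunov

end

theorem stmt_7_general {q m : ℕ}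
    (f₀ : EuclideanSpace ℝ (Fin m) → EuclideanSpace ℝ (Fin m))
    (g₀ : EuclideanSpace ℝ (Fin m) →
      (EuclideanSpace ℝ (Fin q) →L[ℝ] EuclideanSpace ℝ (Fin m)))
    (W₀ : EuclideanSpace ℝ (Fin m) → ℝ) (hW₀ : ContDiff ℝ 1 W₀)
    (c₁ c₂ c₃ c₄ C : ℝ) (hc₁ : 0 < c₁) (hc₂ : 0 < c₂) (hc₃ : 0 < c₃)
    (hW₀low : ∀ η, c₁ * ‖η‖ ^ 2 ≤ W₀ η) (hW₀high : ∀ η, W₀ η ≤ c₂ * ‖η‖ ^ 2)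
    (hW₀diss : ∀ η, fderiv ℝ W₀ η (f₀ η) ≤ -(c₃ * ‖η‖ ^ 2))
    (hW₀grad : ∀ η, ‖fderiv ℝ W₀ η‖ ≤ c₄ * ‖η‖)
    (hg₀ : ∀ η, ‖g₀ η‖ ≤ C) :
    -- global exponential stability of the cascade, for every gain k ≥ 1
    (∀ k : ℝ, 1 ≤ k → ∃ M > (0:ℝ), ∃ lam > (0:ℝ),
      ∀ (ξ : ℝ → EuclideanSpace ℝ (Fin q)) (η : ℝ → EuclideanSpace ℝ (Fin m)),
        (∀ t : ℝ, 0 ≤ t → HasDerivAt ξ (-(k • ξ t)) t) →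
        (∀ t : ℝ, 0 ≤ t → HasDerivAt η (f₀ (η t) + g₀ (η t) (ξ t)) t) →
        ∀ t : ℝ, 0 ≤ t →
          ‖ξ t‖ + ‖η t‖ ≤ M * Real.exp (-lam * t) * (‖ξ 0‖ + ‖η 0‖)) ∧
    -- uniform-in-k energy bounds
    (∃ K₁ > (0:ℝ), ∃ K₂ > (0:ℝ), ∀ k : ℝ, 1 ≤ k →
      ∀ (ξ : ℝ → EuclideanSpace ℝ (Fin q)) (η : ℝ → EuclideanSpace ℝ (Fin m)),
        (∀ t : ℝ, 0 ≤ t → HasDerivAt ξ (-(k • ξ t)) t) →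
        (∀ t : ℝ, 0 ≤ t → HasDerivAt η (f₀ (η t) + g₀ (η t) (ξ t)) t) →
        (∫ t in Set.Ioi (0:ℝ), ‖ξ t‖ ^ 2) ≤ K₁ * ‖ξ 0‖ ^ 2 / k ∧
        (∫ t in Set.Ioi (0:ℝ), ‖η t‖ ^ 2) ≤ K₂ * (‖η 0‖ ^ 2 + ‖ξ 0‖ ^ 2 / k)) := by
  have hW : IsExpLyapunov f₀ W₀ c₁ c₂ c₃ c₄ :=
    ⟨hW₀.differentiable one_ne_zero, hW₀low, hW₀high, hW₀diss, hW₀grad⟩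
  have hα : 0 < min (c₃ / (2 * c₂)) 1 := lt_min (by positivity) one_pos
  refine ⟨fun k hk => ⟨_, by positivity, _, half_pos hα, fun ξ η hξ hη t ht =>
      hW.cascade_norm_add_norm_le hc₁ hc₂ hc₃ hg₀ hk hξ hη ht⟩,
    ⟨1 / 2, one_half_pos, _, by positivity, fun k hk ξ η hξ hη =>
      ⟨integral_norm_sq_le_of_hasDerivAt_neg_smul (by linarith) hξ,
        hW.cascade_integral_norm_sq_le hc₁ hc₂ hc₃ hg₀ hk hξ hη⟩⟩⟩

/-- the strict-feedback cascade `ξ̇ = -kξ`, `η̇ = f₀(η)+g₀(η)ξ`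
with exponentially stable zero dynamics (certified by a Lyapunov function `W₀`)
and bounded `g₀` is globally exponentially stable, with output/state energies
`∫‖ξ‖² ≤ K₁‖ξ(0)‖²/k` and `∫‖η‖² ≤ K₂(‖η(0)‖² + ‖ξ(0)‖²/k)` uniformly in `k ≥ 1`. -/
theorem stmt_7 {q m : ℕ}
    (f₀ : EuclideanSpace ℝ (Fin m) → EuclideanSpace ℝ (Fin m))
    (g₀ : EuclideanSpace ℝ (Fin m) →
      (EuclideanSpace ℝ (Fin q) →L[ℝ] EuclideanSpace ℝ (Fin m)))
    (W₀ : EuclideanSpace ℝ (Fin m) → ℝ) (hW₀ : ContDiff ℝ 1 W₀)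
    (c₁ c₂ c₃ c₄ C : ℝ) (hc₁ : 0 < c₁) (hc₂ : 0 < c₂) (hc₃ : 0 < c₃)
    (hc₄ : 0 < c₄) (hC : 0 < C)
    (hW₀low : ∀ η, c₁ * ‖η‖ ^ 2 ≤ W₀ η) (hW₀high : ∀ η, W₀ η ≤ c₂ * ‖η‖ ^ 2)
    (hW₀diss : ∀ η, fderiv ℝ W₀ η (f₀ η) ≤ -(c₃ * ‖η‖ ^ 2))
    (hW₀grad : ∀ η, ‖fderiv ℝ W₀ η‖ ≤ c₄ * ‖η‖)
    (hg₀ : ∀ η, ‖g₀ η‖ ≤ C) :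
    -- global exponential stability of the cascade, for every gain k ≥ 1
    (∀ k : ℝ, 1 ≤ k → ∃ M > (0:ℝ), ∃ lam > (0:ℝ),
      ∀ (ξ : ℝ → EuclideanSpace ℝ (Fin q)) (η : ℝ → EuclideanSpace ℝ (Fin m)),
        (∀ t : ℝ, 0 ≤ t → HasDerivAt ξ (-(k • ξ t)) t) →
        (∀ t : ℝ, 0 ≤ t → HasDerivAt η (f₀ (η t) + g₀ (η t) (ξ t)) t) →
        ∀ t : ℝ, 0 ≤ t →
          ‖ξ t‖ + ‖η t‖ ≤ M * Real.exp (-lam * t) * (‖ξ 0‖ + ‖η 0‖)) ∧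
    -- uniform-in-k energy bounds
    (∃ K₁ > (0:ℝ), ∃ K₂ > (0:ℝ), ∀ k : ℝ, 1 ≤ k →
      ∀ (ξ : ℝ → EuclideanSpace ℝ (Fin q)) (η : ℝ → EuclideanSpace ℝ (Fin m)),
        (∀ t : ℝ, 0 ≤ t → HasDerivAt ξ (-(k • ξ t)) t) →
        (∀ t : ℝ, 0 ≤ t → HasDerivAt η (f₀ (η t) + g₀ (η t) (ξ t)) t) →
        (∫ t in Set.Ioi (0:ℝ), ‖ξ t‖ ^ 2) ≤ K₁ * ‖ξ 0‖ ^ 2 / k ∧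
        (∫ t in Set.Ioi (0:ℝ), ‖η t‖ ^ 2) ≤ K₂ * (‖η 0‖ ^ 2 + ‖ξ 0‖ ^ 2 / k)) :=
  stmt_7_general f₀ g₀ W₀ hW₀ c₁ c₂ c₃ c₄ C hc₁ hc₂ hc₃ hW₀low hW₀high hW₀diss hW₀grad hg₀
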